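/- Under synchronous majority dynamics on the infinite k-regular tree, if H is an alternating ⌈(k+1)/2⌉-core with respect to the configuration σ(T), then H is an alternating ⌈(k+1)/2⌉-core with respect to σ(T') for all T' > T. In particular, the even vertices of H at time T have spin −1 at all even times T + 2m and the odd vertices of H have spin −1 at all odd times T + 2m + 1. -/

import Mathlib

/-- One synchronous step of the majority process. -/
noncomputable def majStep {V : Type*} (G : SimpleGraph V) [G.LocallyFinite]
    (coin : V → Bool) (σ : V → ℤ) (i : V) : ℤ :=
  let s : ℤ := ∑ j ∈ G.neighborFinset i, σ j
  if 0 < s then 1 else if s < 0 then -1 else if coin i then σ i else -σ i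

/-- The trajectory of the synchronous majority process. -/
noncomputable def majTraj {V : Type*} (G : SimpleGraph V) [G.LocallyFinite]
    (coins : ℕ → V → Bool) (σ0 : V → ℤ) : ℕ → V → ℤ
  | 0 => σ0
  | t + 1 => majStep G (coins t) (majTraj G coins σ0 t)

/-- The number of neighbors of i lying in the set S. -/
noncomputable def nbrCount {V : Type*} (G : SimpleGraph V) (S : Set V) (i : V) : ℕ :=
  {j | G.Adj i j ∧ j ∈ S}.ncard

/-- `IsAltCore G r σ Sm Ss` : the induced subgraph on Sm ∪ Ss is an alternating r-core
with respect to σ: every vertex has at least r neighbors inside the core, all vertices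
of the even class Sm have spin −1, and the core is bipartite with classes (Sm, Ss). -/
def IsAltCore {V : Type*} (G : SimpleGraph V) (r : ℕ) (σ : V → ℤ)
    (Sm Ss : Set V) : Prop :=
  Disjoint Sm Ss ∧
  (∀ i ∈ Sm ∪ Ss, r ≤ nbrCount G (Sm ∪ Ss) i) ∧
  (∀ i ∈ Sm, σ i = -1) ∧
  (∀ i ∈ Sm, ∀ j, G.Adj i j → j ∈ Sm ∪ Ss → j ∈ Ss) ∧
  (∀ i ∈ Ss, ∀ j, G.Adj i j → j ∈ Sm ∪ Ss → j ∈ Sm)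

/-!
A vertex of the passive class of an alternating `r`-core with `2r > k` has a strict majority of
its `k` neighbours in the active class, all with spin `−1`; so one majority step turns the passive
class to `−1`, and the core is again alternating with the two classes exchanged.
-/

open Finset

theorem Finset.sum_neg_of_card_lt_two_mul_card {ι : Type*} [DecidableEq ι] {s t : Finset ι}
    {σ : ι → ℤ} (hts : t ⊆ s) (hle : ∀ j ∈ s, σ j ≤ 1) (hneg : ∀ j ∈ t, σ j = -1)
    (hcard : #s < 2 * #t) : ∑ j ∈ s, σ j < 0 := by
  have hrest : ∑ j ∈ s \ t, σ j ≤ #(s \ t) := by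
    simpa using sum_le_sum fun j hj => hle j (mem_sdiff.mp hj).1
  have hactive : ∑ j ∈ t, σ j = -#t := by
    simp [sum_congr rfl hneg]
  have hcard_sdiff : (#(s \ t) : ℤ) = #s - #t := by
    rw [card_sdiff_of_subset hts, Nat.cast_sub (card_le_card hts)]
  rw [← sum_sdiff hts]
  omega

section Majority

variable {V : Type*} (G : SimpleGraph V) [G.LocallyFinite]

theorem majStep_eq_neg_one_of_sum_neg {coin : V → Bool} {σ : V → ℤ} {i : V}
    (hs : ∑ j ∈ G.neighborFinset i, σ j < 0) : majStep G coin σ i = -1 := by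
  simp only [majStep, if_neg hs.not_gt, if_pos hs]

theorem majStep_eq_one_or_neg_one (coin : V → Bool) {σ : V → ℤ}
    (hσ : ∀ i, σ i = 1 ∨ σ i = -1) (i : V) :
    majStep G coin σ i = 1 ∨ majStep G coin σ i = -1 := by
  simp only [majStep]
  rcases hσ i with h | h <;> split_ifs <;> simp [h]

theorem majTraj_eq_one_or_neg_one (coins : ℕ → V → Bool) {σ0 : V → ℤ}
    (hσ : ∀ i, σ0 i = 1 ∨ σ0 i = -1) : ∀ t i,
    majTraj G coins σ0 t i = 1 ∨ majTraj G coins σ0 t i = -1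
  | 0 => hσ
  | t + 1 => majStep_eq_one_or_neg_one G (coins t) (majTraj_eq_one_or_neg_one coins hσ t)

theorem nbrCount_eq_card_filter (S : Set V) (i : V) [DecidablePred (· ∈ S)] :
    nbrCount G S i = #{j ∈ G.neighborFinset i | j ∈ S} := by
  rw [nbrCount, ← Set.ncard_coe_finset]
  congr 1
  ext j
  simp

end Majority

namespace IsAltCore

variable {V : Type*} {G : SimpleGraph V} {r : ℕ} {σ : V → ℤ} {A B : Set V}

theorem swap (h : IsAltCore G r σ A B) {σ' : V → ℤ} (hB : ∀ i ∈ B, σ' i = -1) :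
    IsAltCore G r σ' B A := by
  obtain ⟨hdisj, hcount, -, hAB, hBA⟩ := h
  rw [Set.union_comm] at hcount hAB hBA
  exact ⟨hdisj.symm, hcount, hB, hBA, hAB⟩

theorem le_card_neighborFinset_filter [G.LocallyFinite] [DecidablePred (· ∈ A)]
    (h : IsAltCore G r σ A B) {i : V} (hi : i ∈ B) :
    r ≤ #{j ∈ G.neighborFinset i | j ∈ A} := by
  classical
  calc r ≤ nbrCount G (A ∪ B) i := h.2.1 i (Or.inr hi)
    _ = #{j ∈ G.neighborFinset i | j ∈ A ∪ B} := nbrCount_eq_card_filter G _ i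
    _ ≤ #{j ∈ G.neighborFinset i | j ∈ A} := card_le_card fun j hj => by
        simp only [mem_filter, SimpleGraph.mem_neighborFinset] at hj ⊢
        exact ⟨hj.1, h.2.2.2.2 i hi j hj.1 hj.2⟩

theorem majStep_swap [G.LocallyFinite] (h : IsAltCore G r σ A B)
    (hdeg : ∀ v, G.degree v < 2 * r) (hσ : ∀ i, σ i ≤ 1) (coin : V → Bool) :
    IsAltCore G r (majStep G coin σ) B A := by
  classical
  refine h.swap fun i hi => majStep_eq_neg_one_of_sum_neg G ?_
  refine sum_neg_of_card_lt_two_mul_card (filter_subset _ _) (fun j _ => hσ j)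
    (fun j hj => h.2.2.1 j (mem_filter.mp hj).2) ?_
  have hactive := h.le_card_neighborFinset_filter hi
  rw [G.card_neighborFinset_eq_degree]
  linarith [hdeg i]

theorem majTraj_alternating [G.LocallyFinite] (h : IsAltCore G r σ A B)
    (hdeg : ∀ v, G.degree v < 2 * r) (hσ : ∀ i, σ i = 1 ∨ σ i = -1) (coins : ℕ → V → Bool) :
    ∀ t, IsAltCore G r (majTraj G coins σ t)
      (if t % 2 = 0 then A else B) (if t % 2 = 0 then B else A)
  | 0 => by simpa [majTraj] using h
  | t + 1 => by
    have hstep := (h.majTraj_alternating hdeg hσ coins t).majStep_swap hdeg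
      (fun i => (majTraj_eq_one_or_neg_one G coins hσ t i).elim le_of_eq (by omega)) (coins t)
    rcases Nat.mod_two_eq_zero_or_one t with ht | ht
    · simpa [majTraj, ht, Nat.succ_mod_two_eq_one_iff.mpr ht] using hstep
    · simpa [majTraj, ht, Nat.succ_mod_two_eq_zero_iff.mpr ht] using hstep

end IsAltCore

theorem alternating_core_persists_general
    {V : Type*} (G : SimpleGraph V) [G.LocallyFinite]
    (k : ℕ) (hreg : ∀ v, G.degree v = k)
    (σ0 : V → ℤ) (hpm : ∀ i, σ0 i = 1 ∨ σ0 i = -1)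
    (Sm Ss : Set V) (hcore : IsAltCore G ((k + 2) / 2) σ0 Sm Ss)
    (coins : ℕ → V → Bool) :
    (∀ t, IsAltCore G ((k + 2) / 2) (majTraj G coins σ0 t)
      (if t % 2 = 0 then Sm else Ss) (if t % 2 = 0 then Ss else Sm)) ∧
    (∀ m, (∀ i ∈ Sm, majTraj G coins σ0 (2 * m) i = -1) ∧
      (∀ i ∈ Ss, majTraj G coins σ0 (2 * m + 1) i = -1)) := by
  have hdeg : ∀ v, G.degree v < 2 * ((k + 2) / 2) := fun v => by rw [hreg v]; omega
  have hpersist := hcore.majTraj_alternating hdeg hpm coins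
  refine ⟨hpersist, fun m => ⟨fun i hi => ?_, fun i hi => ?_⟩⟩
  · simpa using (hpersist (2 * m)).2.2.1 i (by simpa using hi)
  · have hodd : (2 * m + 1) % 2 ≠ 0 := by omega
    simpa [hodd] using (hpersist (2 * m + 1)).2.2.1 i (by simpa [hodd] using hi)

/-- under majority dynamics on the k-regular tree, an alternating
⌈(k+1)/2⌉-core persists forever (with the two classes swapping roles at each step);
in particular the even vertices are −1 at all even times and the odd vertices are −1
at all odd times.  Here ⌈(k+1)/2⌉ = (k+2)/2 in natural division. -/
theorem alternating_core_persists
    {V : Type*} (G : SimpleGraph V) [G.LocallyFinite]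
    (k : ℕ) (hk : 3 ≤ k) (hreg : ∀ v, G.degree v = k) (htree : G.IsTree)
    (σ0 : V → ℤ) (hpm : ∀ i, σ0 i = 1 ∨ σ0 i = -1)
    (Sm Ss : Set V) (hcore : IsAltCore G ((k + 2) / 2) σ0 Sm Ss)
    (coins : ℕ → V → Bool) :
    (∀ t, IsAltCore G ((k + 2) / 2) (majTraj G coins σ0 t)
      (if t % 2 = 0 then Sm else Ss) (if t % 2 = 0 then Ss else Sm)) ∧
    (∀ m, (∀ i ∈ Sm, majTraj G coins σ0 (2 * m) i = -1) ∧
      (∀ i ∈ Ss, majTraj G coins σ0 (2 * m + 1) i = -1)) :=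
  alternating_core_persists_general G k hreg σ0 hpm Sm Ss hcore coins
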